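/- arXiv:2504.09638 — 5 statements merged into one kernel-verified Lean document; each statement's English description precedes it below -/
import Mathlib

section
/- Conditional decomposition of the ℓ¹ Wasserstein transport cost to a finitely supported distribution: for every Borel probability measure P on ℝ^m, the infimum over all couplings Π of P and P^e of ∫ ‖ξ − ζ‖₁ dΠ(ξ,ζ) equals the infimum, over all S-tuples (P_1,…,P_S) of Borel probability measures on ℝ^m satisfying Σ_{s=1}^S π_s P_s = P, of Σ_{s=1}^S π_s ∫ ‖ξ − ξ^e_s‖₁ dP_s(ξ), where both infima are taken in [0,∞]. -/
/-!
A coupling whose second marginal is `∑ s, π s • δ (ξe s)` carries the same information as the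
family of conditional laws `P_s` of its first coordinate given that the second one equals
`ξe s`. Gluing the measures `P_s ⊗ δ (ξe s)` turns a decomposition `P = ∑ s, π s • P_s` into a
coupling of the same cost; conversely, disintegrating a coupling along its second coordinate
(possible since `ℝ^m` is standard Borel) turns it into a decomposition of the same cost.
-/

open MeasureTheory ProbabilityTheory
open scoped ENNReal

namespace MeasureTheory.Measure

variable {X Y ι : Type*} [MeasurableSpace X] [MeasurableSpace Y] [Fintype ι]

lemma lintegral_sum_smul_dirac (w : ι → ℝ≥0∞) (y : ι → Y) {f : Y → ℝ≥0∞} (hf : Measurable f) :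
    ∫⁻ b, f b ∂(∑ i, w i • dirac (y i)) = ∑ i, w i * f (y i) := by
  simp only [lintegral_finsetSum_measure, lintegral_smul_measure, lintegral_dirac' _ hf,
    smul_eq_mul]

lemma comp_sum_smul_dirac (κ : Kernel Y X) (w : ι → ℝ≥0∞) (y : ι → Y) :
    κ ∘ₘ (∑ i, w i • dirac (y i)) = ∑ i, w i • κ (y i) := by
  ext A hA
  rw [bind_apply hA κ.aemeasurable, lintegral_sum_smul_dirac w y (κ.measurable_coe hA)]
  simp only [coe_finsetSum, Finset.sum_apply, smul_apply, smul_eq_mul]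

theorem exists_coupling_of_sum_smul_dirac (w : ι → ℝ≥0∞) (y : ι → Y) (Ps : ι → Measure X)
    [∀ i, IsProbabilityMeasure (Ps i)] :
    ∃ ρ : Measure (X × Y), ρ.map Prod.fst = ∑ i, w i • Ps i ∧
      ρ.map Prod.snd = ∑ i, w i • dirac (y i) ∧
      ∀ f : X × Y → ℝ≥0∞, Measurable f →
        ∫⁻ p, f p ∂ρ = ∑ i, w i * ∫⁻ x, f (x, y i) ∂(Ps i) := by
  have hmk : ∀ i, Measurable fun x : X => (x, y i) := fun i => measurable_prodMk_right
  refine ⟨∑ i, w i • (Ps i).map (fun x => (x, y i)), ?_, ?_, fun f hf => ?_⟩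
  · rw [map_finset_sum' measurable_fst.aemeasurable]
    simp only [Measure.map_smul, map_map measurable_fst (hmk _), Function.comp_def, map_id']
  · rw [map_finset_sum' measurable_snd.aemeasurable]
    simp only [Measure.map_smul, map_map measurable_snd (hmk _), Function.comp_def, map_const,
      measure_univ, one_smul]
  · simp only [lintegral_finsetSum_measure, lintegral_smul_measure, lintegral_map hf (hmk _),
      smul_eq_mul]

theorem exists_decomposition_of_map_snd_eq_sum_smul_dirac [StandardBorelSpace X] [Nonempty X]
    {ρ : Measure (X × Y)} [IsFiniteMeasure ρ] {w : ι → ℝ≥0∞} {y : ι → Y}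
    (hρ : ρ.map Prod.snd = ∑ i, w i • dirac (y i)) :
    ∃ Ps : ι → Measure X, (∀ i, IsProbabilityMeasure (Ps i)) ∧
      ∑ i, w i • Ps i = ρ.map Prod.fst ∧
      ∀ f : X × Y → ℝ≥0∞, Measurable f →
        ∫⁻ p, f p ∂ρ = ∑ i, w i * ∫⁻ x, f (x, y i) ∂(Ps i) := by
  set κ := (ρ.map Prod.swap).condKernel
  have hdis : ρ.snd ⊗ₘ κ = ρ.map Prod.swap := by
    rw [← fst_map_swap]
    exact disintegrate _ _
  refine ⟨fun i => κ (y i), fun i => inferInstance, ?_, fun f hf => ?_⟩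
  · rw [← comp_sum_smul_dirac, ← hρ, ← snd, ← snd_compProd, hdis, snd_map_swap]
    rfl
  · have hf' : Measurable fun q : Y × X => f q.swap := hf.comp measurable_swap
    calc ∫⁻ p, f p ∂ρ = ∫⁻ q, f q.swap ∂(ρ.map Prod.swap) :=
          (lintegral_map hf' measurable_swap).symm
      _ = ∑ i, w i * ∫⁻ x, f (x, y i) ∂κ (y i) := by
        rw [← hdis, lintegral_compProd hf', snd, hρ,
          lintegral_sum_smul_dirac w y hf'.lintegral_kernel_prod_right']
        rfl

end MeasureTheory.Measure

theorem stmt7_general {m S : ℕ} (ξe : Fin S → Fin m → ℝ)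
    (π : Fin S → ℝ)
    (P : Measure (Fin m → ℝ)) (hP : IsProbabilityMeasure P) :
    (⨅ (Plan : Measure ((Fin m → ℝ) × (Fin m → ℝ)))
        (_ : IsProbabilityMeasure Plan) (_ : Plan.map Prod.fst = P)
        (_ : Plan.map Prod.snd =
          ∑ s, ENNReal.ofReal (π s) • Measure.dirac (ξe s)),
        ∫⁻ p, ENNReal.ofReal (∑ i, |p.1 i - p.2 i|) ∂Plan) =
      ⨅ (Ps : Fin S → Measure (Fin m → ℝ))
        (_ : ∀ s, IsProbabilityMeasure (Ps s))
        (_ : (∑ s, ENNReal.ofReal (π s) • Ps s) = P),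
        ∑ s, ENNReal.ofReal (π s) *
          ∫⁻ ξ, ENNReal.ofReal (∑ i, |ξ i - ξe s i|) ∂(Ps s) := by
  have hcost : Measurable fun p : (Fin m → ℝ) × (Fin m → ℝ) =>
      ENNReal.ofReal (∑ i, |p.1 i - p.2 i|) := by fun_prop
  refine le_antisymm (le_iInf₂ fun Ps _ => le_iInf fun hsum => ?_)
    (le_iInf₂ fun Plan _ => le_iInf₂ fun hfst hsnd => ?_)
  · obtain ⟨Plan, hfst, hsnd, hint⟩ :=
      Measure.exists_coupling_of_sum_smul_dirac (fun s => ENNReal.ofReal (π s)) ξe Ps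
    have : IsProbabilityMeasure (Plan.map Prod.fst) := by rwa [hfst, hsum]
    have := Measure.isProbabilityMeasure_of_map (μ := Plan) Prod.fst
    exact iInf₂_le_of_le Plan this <| iInf₂_le_of_le (hfst.trans hsum) hsnd (hint _ hcost).le
  · obtain ⟨Ps, hPs, hsum, hint⟩ := Measure.exists_decomposition_of_map_snd_eq_sum_smul_dirac hsnd
    exact iInf₂_le_of_le Ps hPs <| iInf_le_of_le (hsum.trans hfst) (hint _ hcost).ge

/-- Conditional decomposition of the ℓ¹ Wasserstein transport cost to the finitely
supported empirical distribution `P^e = ∑ s, π s • δ_{ξ^e s}`: the infimal coupling cost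
equals the infimum over all decompositions `P = ∑ s, π s • P_s` of
`∑ s, π s ∫ ‖ξ − ξ^e_s‖₁ dP_s(ξ)`, both infima taken in `[0,∞]`. -/
theorem stmt7 {m S : ℕ} (ξe : Fin S → Fin m → ℝ)
    (π : Fin S → ℝ) (hπ : ∀ s, 0 ≤ π s) (hπ1 : ∑ s, π s = 1)
    (P : Measure (Fin m → ℝ)) (hP : IsProbabilityMeasure P) :
    (⨅ (Plan : Measure ((Fin m → ℝ) × (Fin m → ℝ)))
        (_ : IsProbabilityMeasure Plan) (_ : Plan.map Prod.fst = P)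
        (_ : Plan.map Prod.snd =
          ∑ s, ENNReal.ofReal (π s) • Measure.dirac (ξe s)),
        ∫⁻ p, ENNReal.ofReal (∑ i, |p.1 i - p.2 i|) ∂Plan) =
      ⨅ (Ps : Fin S → Measure (Fin m → ℝ))
        (_ : ∀ s, IsProbabilityMeasure (Ps s))
        (_ : (∑ s, ENNReal.ofReal (π s) • Ps s) = P),
        ∑ s, ENNReal.ofReal (π s) *
          ∫⁻ ξ, ENNReal.ofReal (∑ i, |ξ i - ξe s i|) ∂(Ps s) :=
  stmt7_general ξe π P hP
end

section
/- (Theorem 1) The worst-case expectation over the Wasserstein ambiguity set equals the supremum over budget-feasible discrete distributions: if Q̃ : ℝ^m → ℝ is continuous and r ≥ 0, then sup_{P ∈ 𝒫(r)} ∫ Q̃(ξ) dP(ξ) equals the supremum, over all choices of positive integers N_1,…,N_S, points ξ_{sn} ∈ Ξ and weights π_{sn} ≥ 0 (s ∈ {1,…,S}, n ∈ {1,…,N_s}) satisfying Σ_{n=1}^{N_s} π_{sn} = 1 for each s and Σ_{s=1}^S Σ_{n=1}^{N_s} π_s π_{sn} ‖ξ_{sn} − ξ^e_s‖₁ ≤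 r, of the value Σ_{s=1}^S Σ_{n=1}^{N_s} π_s π_{sn} Q̃(ξ_{sn}). -/
/-!
The two sets whose suprema are compared are in fact equal.

A discrete distribution `∑ π s πd s n δ_{ξd s n}` lies in `𝒫(r)`: couple it with `P^e` by moving
the mass `π s πd s n` from `ξd s n` to `ξe s`.

Conversely, let `Plan` couple `P ∈ 𝒫(r)` with `P^e`. Since the second marginal `P^e` is finitely
supported, disintegrating `Plan` along it gives `∫ f dPlan = ∑ s, π s ∫ f (ξ, ξe s) dκ_s(ξ)` with
probability measures `κ_s` carried by the box `Ξ` (when `π s > 0`). The mean of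
`ξ ↦ (Q̃ ξ, ‖ξ - ξe s‖₁)` under `κ_s` lies in the convex hull of the image of `Ξ`, which is compact
in finite dimension, hence closed; so it is a finite convex combination of values at points of `Ξ`.
These combinations reproduce exactly the value `∫ Q̃ dP` and the transport cost
`∫ ‖ξ - ζ‖₁ dPlan ≤ r`.
-/

open MeasureTheory Set

noncomputable section

/-- The ℓ¹ norm on `ℝ^m`. -/
def l1norm {m : ℕ} (v : Fin m → ℝ) : ℝ := ∑ i, |v i|

/-- `Plan` is a coupling of the Borel probability measures `P` and `P'` on `ℝ^m`. -/
def IsCoupling {m : ℕ} (Plan : Measure ((Fin m → ℝ) × (Fin m → ℝ)))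
    (P P' : Measure (Fin m → ℝ)) : Prop :=
  IsProbabilityMeasure Plan ∧ Plan.map Prod.fst = P ∧ Plan.map Prod.snd = P'

/-- The empirical distribution `P^e = ∑ s, π s • δ_{ξ^e s}`. -/
def empDist {m S : ℕ} (π : Fin S → ℝ) (ξe : Fin S → Fin m → ℝ) :
    Measure (Fin m → ℝ) :=
  ∑ s, ENNReal.ofReal (π s) • Measure.dirac (ξe s)

/-- The Wasserstein ambiguity set `𝒫(r)` of radius `r` around the empirical distribution,
supported on the box `Ξ = [lo, hi]`. -/
def amb {m S : ℕ} (lo hi : Fin m → ℝ) (π : Fin S → ℝ)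
    (ξe : Fin S → Fin m → ℝ) (r : ℝ) : Set (Measure (Fin m → ℝ)) :=
  {P | IsProbabilityMeasure P ∧ P (Set.Icc lo hi) = 1 ∧
    ∃ Plan : Measure ((Fin m → ℝ) × (Fin m → ℝ)),
      IsCoupling Plan P (empDist π ξe) ∧
      ∫⁻ p, ENNReal.ofReal (l1norm (p.1 - p.2)) ∂Plan ≤ ENNReal.ofReal r}

open ProbabilityTheory

section ConvexHull

variable {E : Type*} [NormedAddCommGroup E] [NormedSpace ℝ E] [FiniteDimensional ℝ E]

/-- Carathéodory: an affinely independent family has at most `finrank ℝ E + 1` points, and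
shorter families are padded with zero weights. -/
theorem convexHull_eq_image_stdSimplex (K : Set E) :
    convexHull ℝ K = (fun p : (Fin (Module.finrank ℝ E + 1) → ℝ) ×
        (Fin (Module.finrank ℝ E + 1) → E) => ∑ j, p.1 j • p.2 j) ''
      (stdSimplex ℝ _ ×ˢ univ.pi fun _ => K) := by
  classical
  refine Subset.antisymm (fun x hx => ?_) ?_
  · obtain ⟨ι, _, z, w, hzK, hz, hw0, hw1, rfl⟩ := eq_pos_convex_span_of_mem_convexHull hx
    have hcard : Fintype.card ι ≤ Fintype.card (Fin (Module.finrank ℝ E + 1)) := by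
      simpa using hz.card_le_finrank_succ.trans (Nat.succ_le_succ (Submodule.finrank_le _))
    obtain ⟨e⟩ := Function.Embedding.nonempty_of_card_le hcard
    obtain ⟨i₀⟩ : Nonempty ι := by
      by_contra h
      simp [not_nonempty_iff.1 h] at hw1
    let W := Function.extend e w 0
    let Z := Function.extend e z fun _ => z i₀
    have hW : ∀ i, W (e i) = w i := fun i => e.injective.extend_apply _ _ i
    have hZ : ∀ i, Z (e i) = z i := fun i => e.injective.extend_apply _ _ i
    have hWout : ∀ j ∉ range e, W j = 0 := fun j hj => by
      simp [W, Function.extend_apply' _ _ _ (by simpa using hj)]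
    refine ⟨(W, Z), ⟨⟨fun j => ?_, ?_⟩, fun j _ => ?_⟩, ?_⟩
    · by_cases hj : j ∈ range e
      · obtain ⟨i, rfl⟩ := hj
        simpa [hW] using (hw0 i).le
      · exact (hWout j hj).ge
    · rw [← hw1]
      exact (Fintype.sum_of_injective e e.injective w W hWout fun i => (hW i).symm).symm
    · by_cases hj : j ∈ range e
      · obtain ⟨i, rfl⟩ := hj
        simpa [hZ] using hzK (mem_range_self i)
      · simp only [Z, Function.extend_apply' _ _ _ (by simpa using hj)]
        exact hzK (mem_range_self i₀)
    · exact (Fintype.sum_of_injective e e.injective _ _ (fun j hj => by simp [hWout j hj])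
        fun i => by simp [hW, hZ]).symm
  · rintro _ ⟨p, ⟨⟨hp0, hp1⟩, hpK⟩, rfl⟩
    exact (convex_convexHull ℝ K).sum_mem (fun j _ => hp0 j) hp1
      fun j _ => subset_convexHull ℝ K (hpK j (mem_univ j))

theorem IsCompact.convexHull {K : Set E} (hK : IsCompact K) : IsCompact (convexHull ℝ K) := by
  rw [convexHull_eq_image_stdSimplex]
  exact ((isCompact_stdSimplex ℝ _).prod (isCompact_univ_pi fun _ => hK)).image (by fun_prop)

end ConvexHull

section Integral

variable {α E : Type*} [MeasurableSpace α] [TopologicalSpace α] [OpensMeasurableSpace α]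
  [T2Space α] [NormedAddCommGroup E] {μ : Measure α} {K : Set α} {F : α → E}

theorem Continuous.integrable_of_ae_mem_isCompact [IsFiniteMeasure μ] (hF : Continuous F)
    (hK : IsCompact K) (hμK : ∀ᵐ x ∂μ, x ∈ K) : Integrable F μ := by
  simpa [IntegrableOn, Measure.restrict_eq_self_of_ae_mem hμK] using
    hF.continuousOn.integrableOn_compact (μ := μ) hK

variable [NormedSpace ℝ E] [FiniteDimensional ℝ E] [IsProbabilityMeasure μ]

theorem integral_mem_convexHull_image (hF : Continuous F) (hK : IsCompact K)
    (hμK : ∀ᵐ x ∂μ, x ∈ K) : ∫ x, F x ∂μ ∈ convexHull ℝ (F '' K) := by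
  refine (convex_convexHull ℝ _).integral_mem (hK.image hF).convexHull.isClosed ?_
    (hF.integrable_of_ae_mem_isCompact hK hμK)
  filter_upwards [hμK] with x hx
  exact subset_convexHull ℝ _ (mem_image_of_mem F hx)

theorem exists_sum_smul_eq_integral (hF : Continuous F) (hK : IsCompact K)
    (hμK : ∀ᵐ x ∂μ, x ∈ K) :
    ∃ (N : ℕ) (_ : 0 < N) (x : Fin N → α) (w : Fin N → ℝ), (∀ n, x n ∈ K) ∧ (∀ n, 0 ≤ w n) ∧
      ∑ n, w n = 1 ∧ ∑ n, w n • F (x n) = ∫ x, F x ∂μ := by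
  obtain ⟨ι, _, w, z, hw0, hw1, hzK, hsum⟩ :=
    mem_convexHull_iff_exists_fintype.1 (integral_mem_convexHull_image hF hK hμK)
  choose x hxK hxz using hzK
  have hι : Nonempty ι :=
    Finset.univ_nonempty_iff.1 (Finset.nonempty_of_sum_ne_zero (hw1 ▸ one_ne_zero))
  let e := (Fintype.equivFin ι).symm
  refine ⟨Fintype.card ι, Fintype.card_pos, x ∘ e, w ∘ e, fun n => hxK _, fun n => hw0 _, ?_, ?_⟩
  · simpa [e.sum_comp] using hw1
  · simpa [hxz, e.sum_comp (fun i => w i • z i)] using hsum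

end Integral

section DiscreteMeasure

/-- `empDist π ξe` is `discreteMeasure π ξe` by definition. -/
def discreteMeasure {α ι : Type*} [MeasurableSpace α] [Fintype ι] (w : ι → ℝ) (x : ι → α) :
    Measure α :=
  ∑ i, ENNReal.ofReal (w i) • Measure.dirac (x i)

variable {α β ι : Type*} [MeasurableSpace α] [MeasurableSpace β] [Fintype ι] {w : ι → ℝ}
  {x : ι → α}

theorem discreteMeasure_apply {A : Set α} (hA : MeasurableSet A) :
    discreteMeasure w x A = ∑ i, ENNReal.ofReal (w i) * A.indicator 1 (x i) := by
  simp [discreteMeasure, Measure.dirac_apply' _ hA]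

theorem map_discreteMeasure {f : α → β} (hf : Measurable f) :
    (discreteMeasure w x).map f = discreteMeasure w (f ∘ x) := by
  ext A hA
  rw [Measure.map_apply hf hA, discreteMeasure_apply (hf hA), discreteMeasure_apply hA]
  rfl

theorem isProbabilityMeasure_discreteMeasure (hw : ∀ i, 0 ≤ w i) (hw1 : ∑ i, w i = 1) :
    IsProbabilityMeasure (discreteMeasure w x) := by
  constructor
  rw [discreteMeasure_apply MeasurableSet.univ]
  simp [← ENNReal.ofReal_sum_of_nonneg fun i _ => hw i, hw1]

theorem discreteMeasure_sigma_mul {κ : ι → Type*} [∀ i, Fintype (κ i)] {v : (i : ι) → κ i → ℝ}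
    (hw : ∀ i, 0 ≤ w i) (hv : ∀ i j, 0 ≤ v i j) (hv1 : ∀ i, ∑ j, v i j = 1) :
    discreteMeasure (fun p : Σ i, κ i => w p.1 * v p.1 p.2) (fun p => x p.1) =
      discreteMeasure w x := by
  rw [discreteMeasure, discreteMeasure, Fintype.sum_sigma]
  refine Finset.sum_congr rfl fun i _ => ?_
  dsimp only
  rw [← Finset.sum_smul, ← ENNReal.ofReal_sum_of_nonneg fun j _ => mul_nonneg (hw i) (hv i j),
    ← Finset.mul_sum, hv1, mul_one]

variable [MeasurableSingletonClass α]

theorem ae_discreteMeasure_of_forall_mem {K : Set α} (hxK : ∀ i, x i ∈ K) :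
    ∀ᵐ y ∂discreteMeasure w x, y ∈ K := by
  rw [discreteMeasure, ← Measure.sum_fintype, Measure.ae_sum_iff]
  exact fun i => Measure.ae_smul_measure (by simp [ae_dirac_eq, hxK i]) _

theorem apply_of_ae_discreteMeasure {p : α → Prop} (h : ∀ᵐ y ∂discreteMeasure w x, p y) {i : ι}
    (hi : 0 < w i) : p (x i) := by
  have hle : ENNReal.ofReal (w i) • Measure.dirac (x i) ≤ discreteMeasure w x :=
    (Measure.le_sum (fun i => ENNReal.ofReal (w i) • Measure.dirac (x i)) i).trans_eq
      (Measure.sum_fintype _)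
  simpa [ae_dirac_eq] using
    (Measure.ae_ennreal_smul_measure_iff (ENNReal.ofReal_pos.2 hi).ne').1 (ae_mono hle h)

theorem lintegral_discreteMeasure (f : α → ENNReal) :
    ∫⁻ y, f y ∂discreteMeasure w x = ∑ i, ENNReal.ofReal (w i) * f (x i) := by
  simp [discreteMeasure, lintegral_finsetSum_measure, lintegral_dirac]

theorem integral_discreteMeasure {E : Type*} [NormedAddCommGroup E] [NormedSpace ℝ E]
    [CompleteSpace E] (hw : ∀ i, 0 ≤ w i) (f : α → E) :
    ∫ y, f y ∂discreteMeasure w x = ∑ i, w i • f (x i) := by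
  rw [discreteMeasure, integral_finsetSum_measure fun i _ =>
    (integrable_dirac enorm_lt_top).smul_measure ENNReal.ofReal_ne_top]
  simp [integral_smul_measure, integral_dirac, ENNReal.toReal_ofReal (hw _)]

end DiscreteMeasure

section Disintegration

variable {α β ι E : Type*} [MeasurableSpace α] [StandardBorelSpace α] [Nonempty α]
  [MeasurableSpace β] [MeasurableSingletonClass β] [Fintype ι]
  {Plan : Measure (α × β)} [IsFiniteMeasure Plan] {π : ι → ℝ} {y : ι → β}
  [NormedAddCommGroup E] [NormedSpace ℝ E]

theorem integral_eq_sum_integral_condKernel [CompleteSpace E] (hπ : ∀ s, 0 ≤ π s)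
    (hsnd : Plan.map Prod.snd = discreteMeasure π y) {F : α × β → E} (hF : Integrable F Plan) :
    ∫ p, F p ∂Plan = ∑ s, π s • ∫ ξ, F (ξ, y s) ∂(Plan.map Prod.swap).condKernel (y s) := by
  set ρ := Plan.map Prod.swap
  have hρ : ρ.fst = discreteMeasure π y := Measure.fst_map_swap.trans hsnd
  have hFρ : Integrable (fun q => F q.swap) (ρ.fst ⊗ₘ ρ.condKernel) := by
    rw [Measure.disintegrate]
    exact (integrable_map_equiv MeasurableEquiv.prodComm _).2 hF
  calc ∫ p, F p ∂Plan = ∫ q, F q.swap ∂ρ :=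
        (integral_map_equiv MeasurableEquiv.prodComm fun q => F q.swap).symm
    _ = ∫ q, F q.swap ∂(ρ.fst ⊗ₘ ρ.condKernel) := by rw [Measure.disintegrate]
    _ = ∫ ζ, ∫ ξ, F (ξ, ζ) ∂ρ.condKernel ζ ∂ρ.fst := Measure.integral_compProd hFρ
    _ = _ := by rw [hρ, integral_discreteMeasure hπ]

theorem ae_condKernel_of_ae_fst (hsnd : Plan.map Prod.snd = discreteMeasure π y) {p : α → Prop}
    (h : ∀ᵐ q ∂Plan, p q.1) {s : ι} (hs : 0 < π s) :
    ∀ᵐ ξ ∂(Plan.map Prod.swap).condKernel (y s), p ξ := by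
  set ρ := Plan.map Prod.swap
  have hρ : ∀ᵐ q ∂(ρ.fst ⊗ₘ ρ.condKernel), p q.2 := by
    rw [Measure.disintegrate]
    exact MeasurableEquiv.prodComm.measurableEmbedding.ae_map_iff.2 h
  have := Measure.ae_ae_of_ae_compProd hρ
  rw [Measure.fst_map_swap, Measure.snd, hsnd] at this
  exact apply_of_ae_discreteMeasure this hs

theorem exists_sum_sum_smul_eq_integral [TopologicalSpace α] [OpensMeasurableSpace α] [T2Space α]
    [FiniteDimensional ℝ E] (hπ : ∀ s, 0 ≤ π s) (hsnd : Plan.map Prod.snd = discreteMeasure π y)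
    {K : Set α} (hK : IsCompact K) (hK₀ : K.Nonempty) (hPlanK : ∀ᵐ p ∂Plan, p.1 ∈ K)
    {F : α × β → E} (hF : ∀ b, Continuous fun a => F (a, b)) (hFi : Integrable F Plan) :
    ∃ (N : ι → ℕ) (_ : ∀ s, 0 < N s) (x : (s : ι) → Fin (N s) → α)
      (w : (s : ι) → Fin (N s) → ℝ), (∀ s n, x s n ∈ K) ∧ (∀ s n, 0 ≤ w s n) ∧
      (∀ s, ∑ n, w s n = 1) ∧ ∑ s, π s • ∑ n, w s n • F (x s n, y s) = ∫ p, F p ∂Plan := by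
  have hlocal : ∀ s, ∃ (N : ℕ) (_ : 0 < N) (x : Fin N → α) (w : Fin N → ℝ),
      (∀ n, x n ∈ K) ∧ (∀ n, 0 ≤ w n) ∧ ∑ n, w n = 1 ∧
      π s • ∑ n, w n • F (x n, y s) =
        π s • ∫ ξ, F (ξ, y s) ∂(Plan.map Prod.swap).condKernel (y s) := by
    intro s
    rcases (hπ s).eq_or_lt with hs | hs
    · obtain ⟨x₀, hx₀⟩ := hK₀
      exact ⟨1, one_pos, fun _ => x₀, fun _ => 1, fun _ => hx₀, fun _ => zero_le_one,
        by simp, by simp [← hs]⟩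
    · obtain ⟨N, hN, x, w, hx, hw, hw1, hsum⟩ := exists_sum_smul_eq_integral (hF (y s)) hK
        (ae_condKernel_of_ae_fst hsnd hPlanK hs)
      exact ⟨N, hN, x, w, hx, hw, hw1, congrArg (π s • ·) hsum⟩
  choose N hN x w hx hw hw1 hsum using hlocal
  refine ⟨N, hN, x, w, hx, hw, hw1, ?_⟩
  rw [Finset.sum_congr rfl fun s _ => hsum s, integral_eq_sum_integral_condKernel hπ hsnd hFi]

end Disintegration

section Wasserstein

variable {m S : ℕ} {lo hi : Fin m → ℝ} {ξe : Fin S → Fin m → ℝ} {π : Fin S → ℝ}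
  {Qt : (Fin m → ℝ) → ℝ} {r : ℝ}

@[fun_prop]
theorem continuous_l1norm : Continuous (l1norm (m := m)) := by
  unfold l1norm
  fun_prop

theorem l1norm_nonneg (v : Fin m → ℝ) : 0 ≤ l1norm v :=
  Finset.sum_nonneg fun _ _ => abs_nonneg _

theorem exists_mem_amb_integral_eq (hπ : ∀ s, 0 ≤ π s) (hπ1 : ∑ s, π s = 1) {N : Fin S → ℕ}
    {ξd : (s : Fin S) → Fin (N s) → Fin m → ℝ} {πd : (s : Fin S) → Fin (N s) → ℝ}
    (hξd : ∀ s n, ξd s n ∈ Icc lo hi) (hπd : ∀ s n, 0 ≤ πd s n) (hπd1 : ∀ s, ∑ n, πd s n = 1)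
    (hcost : ∑ s, ∑ n, π s * πd s n * (∑ i, |ξd s n i - ξe s i|) ≤ r) :
    ∃ P ∈ amb lo hi π ξe r, ∫ ξ, Qt ξ ∂P = ∑ s, ∑ n, π s * πd s n * Qt (ξd s n) := by
  let w : (Σ s, Fin (N s)) → ℝ := fun i => π i.1 * πd i.1 i.2
  have hw : ∀ i, 0 ≤ w i := fun i => mul_nonneg (hπ _) (hπd _ _)
  have hw1 : ∑ i, w i = 1 := by simp [w, Fintype.sum_sigma, ← Finset.mul_sum, hπd1, hπ1]
  let P := discreteMeasure w fun i => ξd i.1 i.2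
  let Plan := discreteMeasure w fun i => (ξd i.1 i.2, ξe i.1)
  have hP : IsProbabilityMeasure P := isProbabilityMeasure_discreteMeasure hw hw1
  have hPbox : P (Icc lo hi) = 1 := by
    rw [← measure_univ (μ := P)]
    exact (ae_iff_measure_eq measurableSet_Icc.nullMeasurableSet).1
      (ae_discreteMeasure_of_forall_mem fun i => hξd _ _)
  refine ⟨P, ⟨hP, hPbox, Plan, ⟨isProbabilityMeasure_discreteMeasure hw hw1,
    map_discreteMeasure measurable_fst, ?_⟩, ?_⟩, ?_⟩
  · rw [map_discreteMeasure measurable_snd]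
    exact discreteMeasure_sigma_mul hπ hπd hπd1
  · rw [lintegral_discreteMeasure]
    simp_rw [← ENNReal.ofReal_mul (hw _)]
    rw [← ENNReal.ofReal_sum_of_nonneg fun i _ => mul_nonneg (hw i) (l1norm_nonneg _)]
    refine ENNReal.ofReal_le_ofReal (le_of_eq_of_le ?_ hcost)
    rw [Fintype.sum_sigma]
    rfl
  · rw [integral_discreteMeasure hw, Fintype.sum_sigma]
    rfl

theorem exists_discrete_integral_eq_of_mem_amb (hsamp : ∀ s, ξe s ∈ Icc lo hi)
    (hπ : ∀ s, 0 ≤ π s) (hQ : Continuous Qt) (hr : 0 ≤ r) {P : Measure (Fin m → ℝ)}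
    (hP : P ∈ amb lo hi π ξe r) :
    ∃ (N : Fin S → ℕ) (_ : ∀ s, 0 < N s) (ξd : (s : Fin S) → Fin (N s) → Fin m → ℝ)
      (πd : (s : Fin S) → Fin (N s) → ℝ),
      (∀ s n, ξd s n ∈ Icc lo hi) ∧ (∀ s n, 0 ≤ πd s n) ∧ (∀ s, ∑ n, πd s n = 1) ∧
      (∑ s, ∑ n, π s * πd s n * (∑ i, |ξd s n i - ξe s i|) ≤ r) ∧
      ∫ ξ, Qt ξ ∂P = ∑ s, ∑ n, π s * πd s n * Qt (ξd s n) := by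
  obtain ⟨hPprob, hPbox, Plan, ⟨hPlan, hfst, hsnd⟩, hcost⟩ := hP
  let F : (Fin m → ℝ) × (Fin m → ℝ) → ℝ × ℝ := fun p => (Qt p.1, l1norm (p.1 - p.2))
  have hfst_box : ∀ᵐ p ∂Plan, p.1 ∈ Icc lo hi := by
    refine (ae_map_iff measurable_fst.aemeasurable measurableSet_Icc).1 ?_
    rw [hfst, ae_iff_measure_eq measurableSet_Icc.nullMeasurableSet]
    exact hPbox.trans measure_univ.symm
  have hsnd_box : ∀ᵐ p ∂Plan, p.2 ∈ Icc lo hi := by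
    refine (ae_map_iff measurable_snd.aemeasurable measurableSet_Icc).1 ?_
    rw [hsnd]
    exact ae_discreteMeasure_of_forall_mem hsamp
  have hFi : Integrable F Plan := (by fun_prop : Continuous F).integrable_of_ae_mem_isCompact
    (isCompact_Icc.prod isCompact_Icc) (hfst_box.and hsnd_box)
  obtain ⟨N, hN, ξd, πd, hξd, hπd, hπd1, hsum⟩ := exists_sum_sum_smul_eq_integral hπ hsnd
    isCompact_Icc (nonempty_of_measure_ne_zero (hPbox ▸ one_ne_zero)) hfst_box
    (fun ζ => by fun_prop) hFi
  have hintegral : ∫ p, F p ∂Plan = (∫ ξ, Qt ξ ∂P, ∫ p, l1norm (p.1 - p.2) ∂Plan) := by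
    rw [integral_pair hFi.fst hFi.snd, ← hfst,
      integral_map measurable_fst.aemeasurable hQ.aestronglyMeasurable]
  rw [hintegral] at hsum
  have hval := congrArg Prod.fst hsum
  have hcst := congrArg Prod.snd hsum
  simp only [F, Prod.fst_sum, Prod.snd_sum, Prod.smul_fst, Prod.smul_snd, smul_eq_mul,
    Finset.mul_sum, ← mul_assoc] at hval hcst
  refine ⟨N, hN, ξd, πd, hξd, hπd, hπd1, ?_, hval.symm⟩
  calc ∑ s, ∑ n, π s * πd s n * (∑ i, |ξd s n i - ξe s i|)
      = ∫ p, l1norm (p.1 - p.2) ∂Plan := hcst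
    _ ≤ r := by
      rw [integral_eq_lintegral_of_nonneg_ae (ae_of_all _ fun p => l1norm_nonneg _)
        hFi.snd.aestronglyMeasurable]
      exact ENNReal.toReal_le_of_le_ofReal hr hcost

end Wasserstein

theorem stmt9_general {m S : ℕ} (lo hi : Fin m → ℝ)
    (ξe : Fin S → Fin m → ℝ) (hsamp : ∀ s, ξe s ∈ Set.Icc lo hi)
    (π : Fin S → ℝ) (hπ : ∀ s, 0 ≤ π s) (hπ1 : ∑ s, π s = 1)
    (Qt : (Fin m → ℝ) → ℝ) (hQ : Continuous Qt) (r : ℝ) (hr : 0 ≤ r) :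
    sSup {v : ℝ | ∃ P ∈ amb lo hi π ξe r, v = ∫ ξ, Qt ξ ∂P} =
      sSup {v : ℝ | ∃ (N : Fin S → ℕ) (_ : ∀ s, 0 < N s)
        (ξd : (s : Fin S) → Fin (N s) → Fin m → ℝ)
        (πd : (s : Fin S) → Fin (N s) → ℝ),
        (∀ s n, ξd s n ∈ Set.Icc lo hi) ∧ (∀ s n, 0 ≤ πd s n) ∧
        (∀ s, ∑ n, πd s n = 1) ∧
        (∑ s, ∑ n, π s * πd s n * (∑ i, |ξd s n i - ξe s i|) ≤ r) ∧
        v = ∑ s, ∑ n, π s * πd s n * Qt (ξd s n)} := by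
  congr 1
  ext v
  constructor
  · rintro ⟨P, hP, rfl⟩
    exact exists_discrete_integral_eq_of_mem_amb hsamp hπ hQ hr hP
  · rintro ⟨N, -, ξd, πd, hξd, hπd, hπd1, hcost, rfl⟩
    obtain ⟨P, hP, hval⟩ := exists_mem_amb_integral_eq hπ hπ1 hξd hπd hπd1 hcost
    exact ⟨P, hP, hval.symm⟩

/-- (Theorem 1) The worst-case expectation over the Wasserstein ambiguity set equals the
supremum over budget-feasible discrete distributions. -/
theorem stmt9 {m S : ℕ} (lo hi : Fin m → ℝ) (hbox : ∀ i, lo i ≤ hi i)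
    (ξe : Fin S → Fin m → ℝ) (hsamp : ∀ s, ξe s ∈ Set.Icc lo hi)
    (π : Fin S → ℝ) (hπ : ∀ s, 0 ≤ π s) (hπ1 : ∑ s, π s = 1)
    (Qt : (Fin m → ℝ) → ℝ) (hQ : Continuous Qt) (r : ℝ) (hr : 0 ≤ r) :
    sSup {v : ℝ | ∃ P ∈ amb lo hi π ξe r, v = ∫ ξ, Qt ξ ∂P} =
      sSup {v : ℝ | ∃ (N : Fin S → ℕ) (_ : ∀ s, 0 < N s)
        (ξd : (s : Fin S) → Fin (N s) → Fin m → ℝ)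
        (πd : (s : Fin S) → Fin (N s) → ℝ),
        (∀ s n, ξd s n ∈ Set.Icc lo hi) ∧ (∀ s n, 0 ≤ πd s n) ∧
        (∀ s, ∑ n, πd s n = 1) ∧
        (∑ s, ∑ n, π s * πd s n * (∑ i, |ξd s n i - ξe s i|) ≤ r) ∧
        v = ∑ s, ∑ n, π s * πd s n * Qt (ξd s n)} :=
  stmt9_general lo hi ξe hsamp π hπ hπ1 Qt hQ r hr
end
end

section
/- (Proposition 2) The pricing subproblem admits an optimal scenario on the three-valued grid: let x̂ ∈ ℝ^n, α̂ ∈ ℝ, β̂ ≥ 0, π ≥ 0, and ξ^e ∈ Ξ. Let Λ = {λ ∈ ℝ^p : λ ≥ 0, d + F⊤λ ≥ 0} and assume that for every ξ ∈ Ξ the recourse value Q(x̂,ξ) is finite and equals sup_{λ ∈ Λ} ⟨G x̂ + K ξ − h, λ⟩ (linear programming strong duality). Define f(ξ) = π ( Q(x̂,ξ) − β̂ ‖ξ − ξ^e‖₁ ) − α̂. Then sup_{ξ ∈ Ξ} f(ξ) = max_{ξ ∈ G} f(ξ); in particular there exists an optimal solution ξ̂ of the pricing subproblem max_{ξ ∈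 Ξ} f(ξ) with ξ̂_i ∈ {ξ̲_i, ξ^e_i, ξ̄_i} for every i ∈ {1,…,m}. -/
/-!
Under strong duality the recourse value is a supremum of affine functions of `ξ`, hence convex
on `Ξ`. The box `Ξ` is covered by the cells `∏ᵢ Iᵢ` with `Iᵢ` either `[ξ̲ᵢ, ξ^eᵢ]` or
`[ξ^eᵢ, ξ̄ᵢ]`; on each cell `‖ξ − ξ^e‖₁` is affine, so for `π ≥ 0` the pricing objective is
convex there and is dominated by its value at a vertex of the cell. All vertices lie on the
finite grid, so a maximiser over the grid is a maximiser over `Ξ`.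
-/

open Set

theorem convexOn_of_isLUB_image {𝕜 E β ι : Type*} [Semiring 𝕜] [PartialOrder 𝕜]
    [AddCommMonoid E] [Module 𝕜 E] [AddCommMonoid β] [PartialOrder β] [IsOrderedAddMonoid β]
    [Module 𝕜 β] [PosSMulMono 𝕜 β] {s : Set E} {Λ : Set ι} {φ : ι → E → β} {g : E → β}
    (hs : Convex 𝕜 s) (hφ : ∀ i ∈ Λ, ConvexOn 𝕜 s (φ i))
    (hg : ∀ x ∈ s, IsLUB ((fun i => φ i x) '' Λ) (g x)) : ConvexOn 𝕜 s g := by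
  refine ⟨hs, fun x hx y hy a b ha hb hab => (hg _ (hs hx hy ha hb hab)).2 ?_⟩
  rintro _ ⟨i, hi, rfl⟩
  exact ((hφ i hi).2 hx hy ha hb hab).trans <| add_le_add
    (smul_le_smul_of_nonneg_left ((hg x hx).1 ⟨i, hi, rfl⟩) ha)
    (smul_le_smul_of_nonneg_left ((hg y hy).1 ⟨i, hi, rfl⟩) hb)

theorem convexOn_of_map_smul_add_smul {𝕜 E β : Type*} [Semiring 𝕜] [PartialOrder 𝕜]
    [AddCommMonoid E] [Module 𝕜 E] [AddCommMonoid β] [PartialOrder β] [Module 𝕜 β]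
    {s : Set E} {f : E → β} (hs : Convex 𝕜 s)
    (hf : ∀ x y : E, ∀ a b : 𝕜, a + b = 1 → f (a • x + b • y) = a • f x + b • f y) :
    ConvexOn 𝕜 s f :=
  ⟨hs, fun x _ y _ a b _ _ hab => (hf x y a b hab).le⟩

theorem ConvexOn.exists_vertex_ge_of_mem_Icc {𝕜 ι : Type*} [Field 𝕜] [LinearOrder 𝕜]
    [IsStrictOrderedRing 𝕜] [Fintype ι] {a b x : ι → 𝕜} {f : (ι → 𝕜) → 𝕜}
    (hf : ConvexOn 𝕜 (Icc a b) f) (hx : x ∈ Icc a b) :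
    ∃ v, (∀ i, v i = a i ∨ v i = b i) ∧ f x ≤ f v := by
  have hab : ∀ i, a i ≤ b i := fun i => (hx.1 i).trans (hx.2 i)
  have hhull : Icc a b = convexHull 𝕜 (univ.pi fun i => {a i, b i}) := by
    simp only [convexHull_pi, convexHull_pair, segment_eq_Icc (hab _), pi_univ_Icc]
  obtain ⟨v, hv, hle⟩ := hf.exists_ge_of_mem_convexHull (hhull ▸ subset_convexHull 𝕜 _)
    (hhull ▸ hx)
  exact ⟨v, fun i => by simpa using hv i (mem_univ i), hle⟩

theorem sum_mul_sub_smul_add_smul {ι : Type*} [Fintype ι] (σ e x y : ι → ℝ) {a b : ℝ}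
    (hab : a + b = 1) :
    ∑ i, σ i * ((a • x + b • y) i - e i) =
      a * ∑ i, σ i * (x i - e i) + b * ∑ i, σ i * (y i - e i) := by
  simp only [Finset.mul_sum, ← Finset.sum_add_distrib]
  refine Finset.sum_congr rfl fun i _ => ?_
  simp only [Pi.add_apply, Pi.smul_apply, smul_eq_mul]
  linear_combination σ i * e i * hab

theorem convexOn_of_isLUB_dual {n m p q : ℕ} (F : Fin p → Fin q → ℝ) (G : Fin p → Fin n → ℝ)
    (K : Fin p → Fin m → ℝ) (d : Fin q → ℝ) (h : Fin p → ℝ) (xhat : Fin n → ℝ)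
    {s : Set (Fin m → ℝ)} (hs : Convex ℝ s) {Qv : (Fin m → ℝ) → ℝ}
    (hdual : ∀ ξ ∈ s,
      IsLUB {v : ℝ | ∃ lam : Fin p → ℝ, (∀ i, 0 ≤ lam i) ∧
        (∀ j, 0 ≤ d j + ∑ i, F i j * lam i) ∧
        v = ∑ i, (∑ j, G i j * xhat j + ∑ i', K i i' * ξ i' - h i) * lam i} (Qv ξ)) :
    ConvexOn ℝ s Qv := by
  refine convexOn_of_isLUB_image
    (Λ := {lam : Fin p → ℝ | (∀ i, 0 ≤ lam i) ∧ ∀ j, 0 ≤ d j + ∑ i, F i j * lam i})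
    (φ := fun (lam : Fin p → ℝ) (ξ : Fin m → ℝ) =>
      ∑ i, (∑ j, G i j * xhat j + ∑ i', K i i' * ξ i' - h i) * lam i)
    hs (fun lam _ => convexOn_of_map_smul_add_smul hs fun x y a b hab => ?_)
    fun ξ hξ => ?_
  · simp only [smul_eq_mul, Finset.mul_sum, ← Finset.sum_add_distrib]
    refine Finset.sum_congr rfl fun i _ => ?_
    have hK : ∑ i', K i i' * (a • x + b • y) i' =
        a * ∑ i', K i i' * x i' + b * ∑ i', K i i' * y i' := by
      simpa using sum_mul_sub_smul_add_smul (K i) 0 x y hab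
    rw [hK]
    linear_combination -(∑ j, G i j * xhat j - h i) * lam i * hab
  · simpa only [Set.image, mem_ofPred_eq, and_assoc, eq_comm] using hdual ξ hξ

theorem exists_Icc_abs_sub_eq_mul {lo e hi x : ℝ} (he : e ∈ Icc lo hi) (hx : x ∈ Icc lo hi) :
    ∃ a b σ : ℝ, x ∈ Icc a b ∧ Icc a b ⊆ Icc lo hi ∧ a ∈ ({lo, e, hi} : Set ℝ) ∧
      b ∈ ({lo, e, hi} : Set ℝ) ∧ ∀ t ∈ Icc a b, |t - e| = σ * (t - e) := by
  rcases le_total x e with hxe | hex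
  · refine ⟨lo, e, -1, ⟨hx.1, hxe⟩, Icc_subset_Icc le_rfl he.2, by simp, by simp,
      fun t ht => ?_⟩
    rw [abs_of_nonpos (sub_nonpos.2 ht.2)]
    ring
  · refine ⟨e, hi, 1, ⟨hex, hx.2⟩, Icc_subset_Icc he.1 le_rfl, by simp, by simp,
      fun t ht => ?_⟩
    rw [abs_of_nonneg (sub_nonneg.2 ht.1)]
    ring

theorem exists_pi_Icc_abs_sub_eq_mul {ι : Type*} {lo e hi x : ι → ℝ} (he : e ∈ Icc lo hi)
    (hx : x ∈ Icc lo hi) :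
    ∃ a b σ : ι → ℝ, x ∈ Icc a b ∧ Icc a b ⊆ Icc lo hi ∧
      (∀ i, a i ∈ ({lo i, e i, hi i} : Set ℝ)) ∧ (∀ i, b i ∈ ({lo i, e i, hi i} : Set ℝ)) ∧
      ∀ y ∈ Icc a b, ∀ i, |y i - e i| = σ i * (y i - e i) := by
  choose a b σ hxab hsub ha hb habs using
    fun i => exists_Icc_abs_sub_eq_mul ⟨he.1 i, he.2 i⟩ ⟨hx.1 i, hx.2 i⟩
  refine ⟨a, b, σ, ⟨fun i => (hxab i).1, fun i => (hxab i).2⟩,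
    fun y hy => ⟨fun i => (hsub i ⟨hy.1 i, hy.2 i⟩).1, fun i => (hsub i ⟨hy.1 i, hy.2 i⟩).2⟩,
    ha, hb, fun y hy i => habs i (y i) ⟨hy.1 i, hy.2 i⟩⟩

theorem ConvexOn.mul_sub_mul_sum_abs_sub_sub {ι : Type*} [Fintype ι] {s : Set (ι → ℝ)}
    {Q : (ι → ℝ) → ℝ} (hQ : ConvexOn ℝ s Q) {π : ℝ} (hπ : 0 ≤ π) (β α : ℝ) {e σ : ι → ℝ}
    (habs : ∀ y ∈ s, ∀ i, |y i - e i| = σ i * (y i - e i)) :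
    ConvexOn ℝ s fun y => π * (Q y - β * ∑ i, |y i - e i|) - α := by
  have hlin : ConvexOn ℝ s fun y => -(π * β) * ∑ i, σ i * (y i - e i) - α :=
    convexOn_of_map_smul_add_smul hQ.1 fun x y a b hab => by
      rw [sum_mul_sub_smul_add_smul σ e x y hab, smul_eq_mul, smul_eq_mul]
      linear_combination α * hab
  refine ((hQ.smul hπ).add hlin).congr fun y hy => ?_
  simp only [Pi.add_apply, smul_eq_mul, Finset.sum_congr rfl fun i _ => habs y hy i]
  ring

theorem stmt10_general {n m p q : ℕ} (lo hi : Fin m → ℝ) (hbox : ∀ i, lo i ≤ hi i)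
    (F : Fin p → Fin q → ℝ) (G : Fin p → Fin n → ℝ) (K : Fin p → Fin m → ℝ)
    (d : Fin q → ℝ) (h : Fin p → ℝ)
    (xhat : Fin n → ℝ) (αhat βhat πs : ℝ) (hπ : 0 ≤ πs)
    (ξev : Fin m → ℝ) (hξe : ξev ∈ Set.Icc lo hi)
    (Qv : (Fin m → ℝ) → ℝ)
    (hdual : ∀ ξ ∈ Set.Icc lo hi,
      IsLUB {v : ℝ | ∃ lam : Fin p → ℝ, (∀ i, 0 ≤ lam i) ∧
        (∀ j, 0 ≤ d j + ∑ i, F i j * lam i) ∧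
        v = ∑ i, (∑ j, G i j * xhat j + ∑ i', K i i' * ξ i' - h i) * lam i} (Qv ξ)) :
    ∃ ξhat ∈ Set.Icc lo hi,
      (∀ i, ξhat i = lo i ∨ ξhat i = ξev i ∨ ξhat i = hi i) ∧
      ∀ ξ ∈ Set.Icc lo hi,
        πs * (Qv ξ - βhat * ∑ i, |ξ i - ξev i|) - αhat ≤
          πs * (Qv ξhat - βhat * ∑ i, |ξhat i - ξev i|) - αhat := by
  have hQ : ConvexOn ℝ (Icc lo hi) Qv :=
    convexOn_of_isLUB_dual F G K d h xhat (convex_Icc lo hi) hdual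
  set grid := univ.pi fun i => ({lo i, ξev i, hi i} : Set ℝ)
  have mem_grid : ∀ g, g ∈ grid ↔ ∀ i, g i = lo i ∨ g i = ξev i ∨ g i = hi i := by
    simp only [grid, mem_univ_pi, mem_insert_iff, mem_singleton_iff, implies_true]
  have hgrid : grid ⊆ Icc lo hi := fun g hg => by
    constructor <;> intro i <;> rcases (mem_grid g).1 hg i with hgi | hgi | hgi <;>
      simp [hgi, hbox i, hξe.1 i, hξe.2 i]
  obtain ⟨ξhat, hξhat, hmax⟩ := exists_max_image grid
    (fun ξ => πs * (Qv ξ - βhat * ∑ i, |ξ i - ξev i|) - αhat)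
    (Finite.pi fun _ => toFinite _) ⟨ξev, (mem_grid ξev).2 fun i => by simp⟩
  refine ⟨ξhat, hgrid hξhat, (mem_grid ξhat).1 hξhat, fun ξ hξ => ?_⟩
  obtain ⟨a, b, σ, hξab, hsub, ha, hb, habs⟩ := exists_pi_Icc_abs_sub_eq_mul hξe hξ
  obtain ⟨v, hv, hle⟩ := ((hQ.subset hsub (convex_Icc a b)).mul_sub_mul_sum_abs_sub_sub hπ
    βhat αhat habs).exists_vertex_ge_of_mem_Icc hξab
  exact hle.trans <| hmax v fun i _ => (hv i).elim (· ▸ ha i) (· ▸ hb i)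

/-- (Proposition 2) The pricing subproblem admits an optimal scenario on the three-valued
grid: assuming linear-programming strong duality holds for the recourse problem at every
`ξ ∈ Ξ` (the recourse value `Qv ξ` is finite, equals the primal infimum and the dual
supremum), the function `f(ξ) = π (Qv ξ − β̂ ‖ξ − ξ^e‖₁) − α̂` attains its supremum over
the box `Ξ` at a point whose every coordinate lies in `{ξ̲ᵢ, ξ^eᵢ, ξ̄ᵢ}`. -/
theorem stmt10 {n m p q : ℕ} (lo hi : Fin m → ℝ) (hbox : ∀ i, lo i ≤ hi i)
    (F : Fin p → Fin q → ℝ) (G : Fin p → Fin n → ℝ) (K : Fin p → Fin m → ℝ)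
    (d : Fin q → ℝ) (h : Fin p → ℝ)
    (xhat : Fin n → ℝ) (αhat βhat πs : ℝ) (hβ : 0 ≤ βhat) (hπ : 0 ≤ πs)
    (ξev : Fin m → ℝ) (hξe : ξev ∈ Set.Icc lo hi)
    (Qv : (Fin m → ℝ) → ℝ)
    (hprimal : ∀ ξ ∈ Set.Icc lo hi,
      IsGLB {v : ℝ | ∃ y : Fin q → ℝ, (∀ j, 0 ≤ y j) ∧
        (∀ i, ∑ j, F i j * y j ≤ h i - ∑ j, G i j * xhat j - ∑ i', K i i' * ξ i') ∧
        v = ∑ j, d j * y j} (Qv ξ))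
    (hdual : ∀ ξ ∈ Set.Icc lo hi,
      IsLUB {v : ℝ | ∃ lam : Fin p → ℝ, (∀ i, 0 ≤ lam i) ∧
        (∀ j, 0 ≤ d j + ∑ i, F i j * lam i) ∧
        v = ∑ i, (∑ j, G i j * xhat j + ∑ i', K i i' * ξ i' - h i) * lam i} (Qv ξ)) :
    ∃ ξhat ∈ Set.Icc lo hi,
      (∀ i, ξhat i = lo i ∨ ξhat i = ξev i ∨ ξhat i = hi i) ∧
      ∀ ξ ∈ Set.Icc lo hi,
        πs * (Qv ξ - βhat * ∑ i, |ξ i - ξev i|) - αhat ≤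
          πs * (Qv ξhat - βhat * ∑ i, |ξhat i - ξev i|) - αhat :=
  stmt10_general lo hi hbox F G K d h xhat αhat βhat πs hπ ξev hξe Qv hdual
end

section
/- Enumeration of extreme points of the two-dimensional linearized polyhedron: let a < e < b be reals and S = {(t,z) ∈ ℝ² : a ≤ t ≤ b, z ≥ t − e, z ≥ e − t}. Then the set of extreme points of S (points of S that do not lie in the open segment between two distinct points of S) is exactly {(a, e − a), (e, 0), (b, b − e)}. -/
/-!
Each of the three listed points is the only point of `S` at which two of its defining
inequalities are tight; the two faces of `S` cut out by those supporting lines are extreme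
subsets, so their intersection, the point, is extreme. Every other point `p` of `S` is the
midpoint of `p - d` and `p + d` for some `d ≠ 0` with both ends in `S`: `d` is vertical when
both epigraph constraints are slack, and runs along the active edge `z = |t - e|` otherwise.
-/

open Set

section ExtremeFaces

variable {𝕜 E : Type*} [Field 𝕜] [LinearOrder 𝕜] [IsStrictOrderedRing 𝕜]
  [AddCommGroup E] [Module 𝕜 E] {A : Set E}

lemma left_eq_of_mem_openSegment_of_le {c u v : 𝕜} (hu : c ≤ u) (hv : c ≤ v)
    (hc : c ∈ openSegment 𝕜 u v) : u = c := by
  rcases eq_or_ne u v with rfl | huv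
  · rw [openSegment_same] at hc
    exact hc.symm
  · rw [openSegment_eq_Ioo' huv] at hc
    exact absurd hc.1 (not_lt.2 (le_min hu hv))

lemma isExtreme_setOf_apply_eq_of_le (ℓ : E →ₗ[𝕜] 𝕜) {c : 𝕜} (hA : ∀ x ∈ A, c ≤ ℓ x) :
    IsExtreme 𝕜 A {x ∈ A | ℓ x = c} := by
  refine ⟨sep_subset _ _, fun x₁ hx₁ x₂ hx₂ x ⟨_, hx⟩ hseg ↦ ⟨hx₁, ?_⟩⟩
  have hℓseg : ℓ x ∈ openSegment 𝕜 (ℓ x₁) (ℓ x₂) := by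
    simpa using image_openSegment 𝕜 ℓ.toAffineMap x₁ x₂ ▸ mem_image_of_mem ℓ.toAffineMap hseg
  exact left_eq_of_mem_openSegment_of_le (hA x₁ hx₁) (hA x₂ hx₂) (hx ▸ hℓseg)

lemma mem_extremePoints_of_sep_eq_singleton (ℓ₁ ℓ₂ : E →ₗ[𝕜] 𝕜) {c₁ c₂ : 𝕜} {p : E}
    (h₁ : ∀ x ∈ A, c₁ ≤ ℓ₁ x) (h₂ : ∀ x ∈ A, c₂ ≤ ℓ₂ x)
    (hp : {x ∈ A | ℓ₁ x = c₁ ∧ ℓ₂ x = c₂} = {p}) : p ∈ A.extremePoints 𝕜 := by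
  rw [← isExtreme_singleton, ← hp]
  convert (isExtreme_setOf_apply_eq_of_le ℓ₁ h₁).inter (isExtreme_setOf_apply_eq_of_le ℓ₂ h₂)
    using 1
  ext x
  simp only [mem_sep_iff, mem_inter_iff]
  tauto

lemma notMem_extremePoints_of_add_mem_of_sub_mem {x d : E} (hd : d ≠ 0) (hadd : x + d ∈ A)
    (hsub : x - d ∈ A) : x ∉ A.extremePoints 𝕜 := fun hx ↦
  hd <| by simpa using hx.2 hsub hadd (mem_openSegment_sub_add x d)

end ExtremeFaces

def linearizedPolyhedron (a e b : ℝ) : Set (ℝ × ℝ) :=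
  {p | a ≤ p.1 ∧ p.1 ≤ b ∧ p.1 - e ≤ p.2 ∧ e - p.1 ≤ p.2}

section LinearizedPolyhedron

variable {a e b t z : ℝ}

lemma vertices_subset_extremePoints_linearizedPolyhedron (hae : a < e) (heb : e < b) :
    {(a, e - a), (e, 0), (b, b - e)} ⊆ (linearizedPolyhedron a e b).extremePoints ℝ := by
  let fst := LinearMap.fst ℝ ℝ ℝ
  let snd := LinearMap.snd ℝ ℝ ℝ
  rintro _ (rfl | rfl | rfl)
  · refine mem_extremePoints_of_sep_eq_singleton fst (snd + fst) (c₁ := a) (c₂ := e)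
      (fun p hp ↦ hp.1) (fun p hp ↦ ?_) ?_
    · simp only [LinearMap.add_apply, LinearMap.snd_apply, LinearMap.fst_apply, snd, fst]
      linarith [hp.2.2.2]
    · ext ⟨t, z⟩
      simp only [linearizedPolyhedron, mem_ofPred_eq, mem_singleton_iff, Prod.mk.injEq,
        LinearMap.add_apply, LinearMap.snd_apply, LinearMap.fst_apply, snd, fst]
      grind
  · refine mem_extremePoints_of_sep_eq_singleton (snd - fst) (snd + fst) (c₁ := -e) (c₂ := e)
      (fun p hp ↦ ?_) (fun p hp ↦ ?_) ?_
    · simp only [LinearMap.sub_apply, LinearMap.snd_apply, LinearMap.fst_apply, snd, fst]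
      linarith [hp.2.2.1]
    · simp only [LinearMap.add_apply, LinearMap.snd_apply, LinearMap.fst_apply, snd, fst]
      linarith [hp.2.2.2]
    · ext ⟨t, z⟩
      simp only [linearizedPolyhedron, mem_ofPred_eq, mem_singleton_iff, Prod.mk.injEq,
        LinearMap.add_apply, LinearMap.sub_apply, LinearMap.snd_apply, LinearMap.fst_apply, snd,
        fst]
      grind
  · refine mem_extremePoints_of_sep_eq_singleton (-fst) (snd - fst) (c₁ := -b) (c₂ := -e)
      (fun p hp ↦ ?_) (fun p hp ↦ ?_) ?_
    · simp only [LinearMap.neg_apply, LinearMap.fst_apply, fst]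
      linarith [hp.2.1]
    · simp only [LinearMap.sub_apply, LinearMap.snd_apply, LinearMap.fst_apply, snd, fst]
      linarith [hp.2.2.1]
    · ext ⟨t, z⟩
      simp only [linearizedPolyhedron, mem_ofPred_eq, mem_singleton_iff, Prod.mk.injEq,
        LinearMap.neg_apply, LinearMap.sub_apply, LinearMap.snd_apply, LinearMap.fst_apply, snd,
        fst]
      grind

lemma notMem_extremePoints_linearizedPolyhedron_of_abs_lt
    (hp : (t, z) ∈ linearizedPolyhedron a e b) (hz : |t - e| < z) :
    (t, z) ∉ (linearizedPolyhedron a e b).extremePoints ℝ := by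
  obtain ⟨hat, htb, -, -⟩ := hp
  have h₁ := le_abs_self (t - e)
  have h₂ := neg_abs_le (t - e)
  refine notMem_extremePoints_of_add_mem_of_sub_mem (d := (0, z - |t - e|)) ?_ ?_ ?_
  · simpa using sub_ne_zero.2 hz.ne'
  all_goals
    simp only [linearizedPolyhedron, mem_ofPred_eq, Prod.mk_add_mk, Prod.mk_sub_mk]
    refine ⟨?_, ?_, ?_, ?_⟩ <;> linarith

lemma notMem_extremePoints_linearizedPolyhedron_of_lt_of_lt_left (hat : a < t) (hte : t < e)
    (heb : e ≤ b) : (t, e - t) ∉ (linearizedPolyhedron a e b).extremePoints ℝ := by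
  set s := min (t - a) (e - t)
  have hs : 0 < s := lt_min (by linarith) (by linarith)
  have hsa : s ≤ t - a := min_le_left _ _
  have hse : s ≤ e - t := min_le_right _ _
  refine notMem_extremePoints_of_add_mem_of_sub_mem (d := (s, -s)) (by simp [hs.ne']) ?_ ?_
  all_goals
    simp only [linearizedPolyhedron, mem_ofPred_eq, Prod.mk_add_mk, Prod.mk_sub_mk]
    refine ⟨?_, ?_, ?_, ?_⟩ <;> linarith

lemma notMem_extremePoints_linearizedPolyhedron_of_lt_of_lt_right (hae : a ≤ e) (het : e < t)
    (htb : t < b) : (t, t - e) ∉ (linearizedPolyhedron a e b).extremePoints ℝ := by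
  set s := min (t - e) (b - t)
  have hs : 0 < s := lt_min (by linarith) (by linarith)
  have hse : s ≤ t - e := min_le_left _ _
  have hsb : s ≤ b - t := min_le_right _ _
  refine notMem_extremePoints_of_add_mem_of_sub_mem (d := (s, s)) (by simp [hs.ne']) ?_ ?_
  all_goals
    simp only [linearizedPolyhedron, mem_ofPred_eq, Prod.mk_add_mk, Prod.mk_sub_mk]
    refine ⟨?_, ?_, ?_, ?_⟩ <;> linarith

lemma extremePoints_linearizedPolyhedron_subset (hae : a ≤ e) (heb : e ≤ b) :
    (linearizedPolyhedron a e b).extremePoints ℝ ⊆ {(a, e - a), (e, 0), (b, b - e)} := by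
  rintro ⟨t, z⟩ hp
  obtain ⟨hat, htb, hz₁, hz₂⟩ := hp.1
  have hz : z = |t - e| := by
    by_contra hne
    exact notMem_extremePoints_linearizedPolyhedron_of_abs_lt hp.1
      ((abs_sub_le_iff.2 ⟨hz₁, hz₂⟩).lt_of_ne (Ne.symm hne)) hp
  rcases lt_trichotomy t e with hte | rfl | het
  · rw [abs_of_neg (sub_neg.2 hte), neg_sub] at hz
    subst hz
    rcases hat.eq_or_lt with rfl | hat
    · exact Or.inl rfl
    · exact absurd hp (notMem_extremePoints_linearizedPolyhedron_of_lt_of_lt_left hat hte heb)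
  · simp [hz]
  · rw [abs_of_pos (sub_pos.2 het)] at hz
    subst hz
    rcases htb.eq_or_lt with rfl | htb
    · exact Or.inr (Or.inr rfl)
    · exact absurd hp (notMem_extremePoints_linearizedPolyhedron_of_lt_of_lt_right hae het htb)

end LinearizedPolyhedron

/-- Enumeration of extreme points of the two-dimensional linearized polyhedron:
for `a < e < b`, the extreme points of
`S = {(t,z) : a ≤ t ≤ b, z ≥ t − e, z ≥ e − t}` are exactly
`{(a, e − a), (e, 0), (b, b − e)}`. -/
theorem stmt12 (a e b : ℝ) (hae : a < e) (heb : e < b) :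
    Set.extremePoints ℝ
        {p : ℝ × ℝ | a ≤ p.1 ∧ p.1 ≤ b ∧ p.1 - e ≤ p.2 ∧ e - p.1 ≤ p.2} =
      {(a, e - a), (e, 0), (b, b - e)} :=
  (extremePoints_linearizedPolyhedron_subset hae.le heb.le).antisymm
    (vertices_subset_extremePoints_linearizedPolyhedron hae heb)
end

section
/- Enumeration of extreme points of the full linearized polyhedron: assume ξ̲_i < ξ^e_i < ξ̄_i for all i ∈ {1,…,m}, and let Ξ̃ = {(ξ,z) ∈ ℝ^m × ℝ^m : for all i, ξ̲_i ≤ ξ_i ≤ ξ̄_i, z_i ≥ ξ_i − ξ^e_i, z_i ≥ ξ^e_i − ξ_i}. Then the set of extreme points of Ξ̃ is exactly {(ξ,z) : for all i, (ξ_i, z_i) ∈ {(ξ̲_i, ξ^e_i − ξ̲_i), (ξ^e_i, 0), (ξ̄_i, ξ̄_i − ξ^e_i)}}, and this set has cardinality 3^m. -/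
/-!
After regrouping the coordinates as `((ξᵢ, zᵢ))ᵢ`, `Ξ̃` is the product of the planar sets
`{(u, v) | ξ̲ᵢ ≤ u ≤ ξ̄ᵢ, |u - ξ^eᵢ| ≤ v}`, and the extreme points of a product are the products
of extreme points. Each planar set is the part over `[ξ̲ᵢ, ξ̄ᵢ]` of the epigraph of a V-shaped
function whose kink lies strictly inside the interval, so its extreme points are the kink and
the two corners above the endpoints.
-/

/-- The feasible polyhedron `Ξ̃` of the dualized pricing subproblem, in the variables
`(ξ, z)`, where `z` linearizes the ℓ¹ deviation `|ξ − ξ^e|` componentwise. -/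
def linPoly {m : ℕ} (lo hi ξev : Fin m → ℝ) : Set ((Fin m → ℝ) × (Fin m → ℝ)) :=
  {p | ∀ i, lo i ≤ p.1 i ∧ p.1 i ≤ hi i ∧
    p.1 i - ξev i ≤ p.2 i ∧ ξev i - p.1 i ≤ p.2 i}

/-- The candidate set of extreme points: componentwise one of the three pairs
`(ξ̲ᵢ, ξ^eᵢ − ξ̲ᵢ)`, `(ξ^eᵢ, 0)`, `(ξ̄ᵢ, ξ̄ᵢ − ξ^eᵢ)`. -/
def gridPoly {m : ℕ} (lo hi ξev : Fin m → ℝ) : Set ((Fin m → ℝ) × (Fin m → ℝ)) :=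
  {p | ∀ i, (p.1 i, p.2 i) ∈
    ({(lo i, ξev i - lo i), (ξev i, 0), (hi i, hi i - ξev i)} : Set (ℝ × ℝ))}

open Set

section PairPi

variable {ι : Type*} {M N : Type*}

def pairPi (s : ι → Set (M × N)) : Set ((ι → M) × (ι → N)) :=
  {p | ∀ i, (p.1 i, p.2 i) ∈ s i}

lemma pairPi_eq_image (s : ι → Set (M × N)) :
    pairPi s = Equiv.arrowProdEquivProdArrow ι (fun _ ↦ M) (fun _ ↦ N) '' univ.pi s := by
  rw [Equiv.image_eq_preimage_symm]
  ext p
  simp only [mem_preimage, mem_univ_pi]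
  rfl

lemma ncard_pairPi [Fintype ι] (s : ι → Set (M × N)) :
    (pairPi s).ncard = ∏ i, (s i).ncard := by
  rw [pairPi_eq_image, ncard_image_of_injective _ (Equiv.injective _), ncard_def,
    encard_pi_eq_prod_encard, ENat.toNat_prod]
  rfl

variable (𝕜 : Type*) [Ring 𝕜] [PartialOrder 𝕜] [IsOrderedRing 𝕜]
  [AddCommGroup M] [Module 𝕜 M] [AddCommGroup N] [Module 𝕜 N]

def piProdLinearEquiv : (ι → M × N) ≃ₗ[𝕜] (ι → M) × (ι → N) :=
  { Equiv.arrowProdEquivProdArrow ι (fun _ ↦ M) (fun _ ↦ N) with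
    map_add' := fun _ _ ↦ rfl
    map_smul' := fun _ _ ↦ rfl }

lemma extremePoints_pairPi (s : ι → Set (M × N)) :
    (pairPi s).extremePoints 𝕜 = pairPi fun i ↦ (s i).extremePoints 𝕜 := by
  have h (t : ι → Set (M × N)) : pairPi t = piProdLinearEquiv (ι := ι) 𝕜 '' univ.pi t :=
    pairPi_eq_image t
  rw [h, ← image_extremePoints, extremePoints_pi, h]

end PairPi

lemma eq_zero_of_mem_extremePoints_of_add_sub_mem {𝕜 E : Type*} [Ring 𝕜] [LinearOrder 𝕜]
    [IsStrictOrderedRing 𝕜] [Invertible (2 : 𝕜)] [AddCommGroup E] [Module 𝕜 E] {A : Set E}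
    {x d : E} (hx : x ∈ A.extremePoints 𝕜) (h₁ : x + d ∈ A) (h₂ : x - d ∈ A) : d = 0 :=
  add_eq_left.mp (hx.2 h₁ h₂ (mem_openSegment_add_sub x d))

section AbsEpigraph

variable {lo hi e : ℝ}

def absEpigraphOn (lo hi e : ℝ) : Set (ℝ × ℝ) :=
  {q | lo ≤ q.1 ∧ q.1 ≤ hi ∧ q.1 - e ≤ q.2 ∧ e - q.1 ≤ q.2}

lemma vertices_subset_exposedPoints_absEpigraphOn (hlo : lo < e) (hhi : e < hi) :
    {(lo, e - lo), (e, 0), (hi, hi - e)} ⊆ (absEpigraphOn lo hi e).exposedPoints ℝ := by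
  -- The three vertices are exposed by `(u, v) ↦ k * u - v` for `k = -2, 0, 2`.
  have exposed (k : ℝ) (x : ℝ × ℝ) (hx : x ∈ absEpigraphOn lo hi e)
      (h : ∀ y ∈ absEpigraphOn lo hi e,
        k * y.1 - y.2 ≤ k * x.1 - x.2 ∧ (k * x.1 - x.2 ≤ k * y.1 - y.2 → y = x)) :
      x ∈ (absEpigraphOn lo hi e).exposedPoints ℝ :=
    ⟨hx, k • ContinuousLinearMap.fst ℝ ℝ ℝ - ContinuousLinearMap.snd ℝ ℝ ℝ, by simpa using h⟩
  rintro x (rfl | rfl | rfl)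
  · refine exposed (-2) _ ⟨le_rfl, by linarith, by linarith, by linarith⟩ ?_
    rintro ⟨u, v⟩ ⟨hu, -, -, hv⟩
    exact ⟨by linarith, fun h ↦ Prod.ext (by linarith) (by linarith)⟩
  · refine exposed 0 _ ⟨hlo.le, hhi.le, by simp, by simp⟩ ?_
    rintro ⟨u, v⟩ ⟨-, -, hv, hv'⟩
    exact ⟨by linarith, fun h ↦ Prod.ext (by linarith) (by linarith)⟩
  · refine exposed 2 _ ⟨by linarith, le_rfl, by linarith, by linarith⟩ ?_
    rintro ⟨u, v⟩ ⟨-, hu, hv, -⟩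
    exact ⟨by linarith, fun h ↦ Prod.ext (by linarith) (by linarith)⟩

lemma mem_vertices_of_mem_extremePoints_absEpigraphOn (hlo : lo < e) (hhi : e < hi)
    {x : ℝ × ℝ} (hx : x ∈ (absEpigraphOn lo hi e).extremePoints ℝ) :
    x ∈ ({(lo, e - lo), (e, 0), (hi, hi - e)} : Set (ℝ × ℝ)) := by
  obtain ⟨u, v⟩ := x
  obtain ⟨hu, hu', hright, hleft⟩ : lo ≤ u ∧ u ≤ hi ∧ u - e ≤ v ∧ e - u ≤ v := hx.1
  have rigid (a b : ℝ) (h₁ : (u + a, v + b) ∈ absEpigraphOn lo hi e)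
      (h₂ : (u - a, v - b) ∈ absEpigraphOn lo hi e) : a = 0 ∧ b = 0 := by
    simpa using eq_zero_of_mem_extremePoints_of_add_sub_mem hx (d := (a, b)) h₁ h₂
  have small (p q : ℝ) (hp : 0 < p) (hq : 0 < q) : ∃ δ, 0 < δ ∧ δ ≤ p ∧ δ ≤ q :=
    ⟨min p q, lt_min hp hq, min_le_left p q, min_le_right p q⟩
  simp only [mem_insert_iff, mem_singleton_iff, Prod.mk.injEq]
  -- Off the vertices, a vertical step or a step along the tight edge `v = |u - e|` stays feasible
  -- in both directions.
  rcases hleft.lt_or_eq with hleft | hleft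
  · rcases hright.lt_or_eq with hright | hright
    · obtain ⟨δ, hδ, hδp, hδq⟩ := small (v - (u - e)) (v - (e - u)) (by linarith) (by linarith)
      have := rigid 0 δ ⟨by linarith, by linarith, by linarith, by linarith⟩
        ⟨by linarith, by linarith, by linarith, by linarith⟩
      linarith
    · rcases hu'.lt_or_eq with hu' | rfl
      · obtain ⟨δ, hδ, hδp, hδq⟩ := small (hi - u) (u - e) (by linarith) (by linarith)
        have := rigid δ δ ⟨by linarith, by linarith, by linarith, by linarith⟩
          ⟨by linarith, by linarith, by linarith, by linarith⟩
        linarith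
      · exact Or.inr (Or.inr ⟨rfl, hright.symm⟩)
  · rcases hright.lt_or_eq with hright | hright
    · rcases hu.lt_or_eq with hu | rfl
      · obtain ⟨δ, hδ, hδp, hδq⟩ := small (u - lo) (e - u) (by linarith) (by linarith)
        have := rigid δ (-δ) ⟨by linarith, by linarith, by linarith, by linarith⟩
          ⟨by linarith, by linarith, by linarith, by linarith⟩
        linarith
      · exact Or.inl ⟨rfl, hleft.symm⟩
    · exact Or.inr (Or.inl ⟨by linarith, by linarith⟩)

lemma extremePoints_absEpigraphOn (hlo : lo < e) (hhi : e < hi) :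
    (absEpigraphOn lo hi e).extremePoints ℝ = {(lo, e - lo), (e, 0), (hi, hi - e)} :=
  Subset.antisymm (fun _ ↦ mem_vertices_of_mem_extremePoints_absEpigraphOn hlo hhi)
    ((vertices_subset_exposedPoints_absEpigraphOn hlo hhi).trans
      exposedPoints_subset_extremePoints)

lemma ncard_vertices_absEpigraphOn (hlo : lo < e) (hhi : e < hi) :
    ({(lo, e - lo), (e, 0), (hi, hi - e)} : Set (ℝ × ℝ)).ncard = 3 :=
  ncard_eq_three.mpr ⟨_, _, _, fun h ↦ hlo.ne (congrArg Prod.fst h),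
    fun h ↦ (hlo.trans hhi).ne (congrArg Prod.fst h), fun h ↦ hhi.ne (congrArg Prod.fst h), rfl⟩

end AbsEpigraph

/-- Enumeration of extreme points of the full linearized polyhedron: if
`ξ̲ᵢ < ξ^eᵢ < ξ̄ᵢ` for all `i`, the set of extreme points of `Ξ̃` is exactly the
componentwise three-valued grid, which has cardinality `3^m`. -/
theorem stmt13 {m : ℕ} (lo hi ξev : Fin m → ℝ)
    (hstrict : ∀ i, lo i < ξev i ∧ ξev i < hi i) :
    Set.extremePoints ℝ (linPoly lo hi ξev) = gridPoly lo hi ξev ∧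
      (gridPoly lo hi ξev).ncard = 3 ^ m := by
  have hlin : linPoly lo hi ξev = pairPi fun i ↦ absEpigraphOn (lo i) (hi i) (ξev i) := rfl
  have hgrid : gridPoly lo hi ξev =
      pairPi fun i ↦ {(lo i, ξev i - lo i), (ξev i, 0), (hi i, hi i - ξev i)} := rfl
  constructor
  · simp only [hlin, hgrid, extremePoints_pairPi,
      extremePoints_absEpigraphOn (hstrict _).1 (hstrict _).2]
  · simp [hgrid, ncard_pairPi, ncard_vertices_absEpigraphOn (hstrict _).1 (hstrict _).2]
end
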